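/- Let m > 1 be real and let μ_m be the measure on ℝ² with density dμ_m(x,t) = (m/2)|t|^{m−2} dx dt. Let K ⊂ {(x,t) ∈ ℝ² : t ≥ 0} be a convex body with 0 ∈ ∂K that is symmetric with respect to the vertical axis ℝe₂ (i.e. (−x,t) ∈ K whenever (x,t) ∈ K), let σ denote reflection in the horizontal axis, and set C = K ∪ σ(K). Then μ_m(C) ≥ ((m−1)/m) · μ_m(conv(C)). -/

import Mathlib

open MeasureTheory
open scoped ENNReal

/-- The measure `μ_m` on `ℝ²` with density `(m/2)·|t|^{m-2}` with respect to Lebesgue measure,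
where `t` is the second coordinate. -/
noncomputable def muM (m : ℝ) : Measure (ℝ × ℝ) :=
  volume.withDensity fun p => ENNReal.ofReal (m / 2 * |p.2| ^ (m - 2))

lemma muM_slice (m : ℝ) {S : Set (ℝ × ℝ)} (hS : MeasurableSet S) :
    muM m S = ∫⁻ t, volume {x | (x, t) ∈ S} * ENNReal.ofReal (m / 2 * |t| ^ (m - 2)) := by
  have hd : Measurable fun p : ℝ × ℝ => ENNReal.ofReal (m / 2 * |p.2| ^ (m - 2)) := by
    apply Measurable.ennreal_ofReal
    exact (measurable_const.mul ((measurable_snd.abs).pow_const _))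
  rw [muM, withDensity_apply _ hS, ← lintegral_indicator hS, Measure.volume_eq_prod,
    lintegral_prod_symm' _ (hd.indicator hS)]
  congr 1
  funext t
  have hslice : MeasurableSet {x : ℝ | (x, t) ∈ S} :=
    (measurable_id.prodMk measurable_const) hS
  have : ∀ x : ℝ, S.indicator (fun p : ℝ × ℝ => ENNReal.ofReal (m / 2 * |p.2| ^ (m - 2))) (x, t)
      = {x : ℝ | (x, t) ∈ S}.indicator (fun _ => ENNReal.ofReal (m / 2 * |t| ^ (m - 2))) x := by
    intro x
    by_cases h : (x, t) ∈ S <;> simp [Set.indicator, h]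
  simp_rw [this]
  rw [lintegral_indicator hslice, setLIntegral_const, mul_comm]

lemma lint_abs_even {s : ℝ} (hs : 0 ≤ s) (f : ℝ → ℝ≥0∞) :
    ∫⁻ t in Set.Icc (-s) s, f |t| = 2 * ∫⁻ t in Set.Icc 0 s, f t := by
  have hsplit : Set.Icc (-s) s = Set.Icc (-s) 0 ∪ Set.Ioc 0 s := by
    rw [Set.Icc_union_Ioc_eq_Icc (by linarith) hs]
  have habs : ∫⁻ t in Set.Icc 0 s, f |t| = ∫⁻ t in Set.Icc 0 s, f t := by
    refine setLIntegral_congr_fun measurableSet_Icc ?_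
    intro x hx
    show f |x| = f x
    rw [abs_of_nonneg hx.1]
  rw [hsplit, lintegral_union measurableSet_Ioc]
  · have hneg : MeasurePreserving (Neg.neg : ℝ → ℝ) volume volume :=
      Measure.measurePreserving_neg _
    have hset : Set.Icc (-s) 0 = (Neg.neg : ℝ → ℝ) ⁻¹' Set.Icc 0 s := by
      ext x; simp [neg_le, le_neg]
    have h1 : ∫⁻ t in Set.Icc (-s) 0, f |t| = ∫⁻ t in Set.Icc 0 s, f t := by
      have key := hneg.setLIntegral_comp_preimage_emb
        (Homeomorph.neg ℝ).measurableEmbedding (fun t => f |t|) (Set.Icc 0 s)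
      simp only [abs_neg] at key
      rw [hset, key, habs]
    have h2 : ∫⁻ t in Set.Ioc 0 s, f |t| = ∫⁻ t in Set.Icc 0 s, f t := by
      rw [Measure.restrict_congr_set Ioc_ae_eq_Icc, habs]
    rw [h1, h2, two_mul]
  · exact Set.disjoint_left.2 fun x hx hx' => absurd hx.2 (not_le.2 hx'.1)

lemma integrable_rpow_Icc (r b : ℝ) (hr : -1 < r) (hb : 0 ≤ b) :
    IntegrableOn (fun t : ℝ => t ^ r) (Set.Icc 0 b) volume := by
  have h := intervalIntegral.intervalIntegrable_rpow' (a := 0) (b := b) hr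
  rw [intervalIntegrable_iff, Set.uIoc_of_le hb] at h
  rwa [integrableOn_Icc_iff_integrableOn_Ioc]

lemma lint_Icc_rpow (m b : ℝ) (hm : 1 < m) (hb : 0 ≤ b) :
    ∫⁻ t in Set.Icc 0 b, ENNReal.ofReal (m / 2 * t ^ (m - 2)) =
      ENNReal.ofReal (m / 2 * b ^ (m - 1) / (m - 1)) := by
  rw [← Measure.restrict_congr_set Ioc_ae_eq_Icc,
    ← ofReal_integral_eq_lintegral_ofReal]
  · rw [← intervalIntegral.integral_of_le hb]
    rw [intervalIntegral.integral_const_mul, integral_rpow (Or.inl (by linarith))]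
    have h1 : m - 2 + 1 = m - 1 := by ring
    rw [h1, Real.zero_rpow (ne_of_gt (by linarith))]
    ring_nf
  · exact ((integrable_rpow_Icc (m - 2) b (by linarith) hb).mono_set
      Set.Ioc_subset_Icc_self).const_mul _
  · filter_upwards [ae_restrict_mem measurableSet_Ioc] with t ht
    have := Real.rpow_nonneg (le_of_lt ht.1) (m - 2)
    positivity

lemma lint_Icc_cone (m s M : ℝ) (hm : 1 < m) (hs : 0 < s) (hM : 0 ≤ M) :
    ∫⁻ t in Set.Icc 0 s, ENNReal.ofReal (2 * (M - M * t / s))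
        * ENNReal.ofReal (m / 2 * t ^ (m - 2))
      = ENNReal.ofReal (M * s ^ (m - 1) * (1 / (m - 1))) := by
  have hm1 : (0:ℝ) < m - 1 := by linarith
  set f1 : ℝ → ℝ := fun t => M * m * t ^ (m - 2) - M * m / s * t ^ (m - 1) with hf1
  have heq : ∀ t ∈ Set.Ioc (0:ℝ) s, (2 * (M - M * t / s)) * (m / 2 * t ^ (m - 2)) = f1 t := by
    intro t ht
    have h2 : t ^ (m - 1) = t ^ (m - 2) * t := by
      have := Real.rpow_add_one (ne_of_gt ht.1) (m - 2)
      rw [show m - 2 + 1 = m - 1 by ring] at this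
      exact this
    simp only [hf1, h2]
    field_simp
  have hpos : ∀ t ∈ Set.Ioc (0:ℝ) s, 0 ≤ f1 t := by
    intro t ht
    rw [← heq t ht]
    have h1 : 0 ≤ M - M * t / s := by
      rw [sub_nonneg, div_le_iff₀ hs]
      nlinarith [ht.2, hM, ht.1]
    have h3 := Real.rpow_nonneg (le_of_lt ht.1) (m - 2)
    positivity
  have hint : IntegrableOn f1 (Set.Ioc 0 s) volume := by
    apply Integrable.sub
    · exact ((integrable_rpow_Icc (m - 2) s (by linarith) hs.le).mono_set
        Set.Ioc_subset_Icc_self).const_mul _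
    · exact ((integrable_rpow_Icc (m - 1) s (by linarith) hs.le).mono_set
        Set.Ioc_subset_Icc_self).const_mul _
  calc ∫⁻ t in Set.Icc 0 s, ENNReal.ofReal (2 * (M - M * t / s))
          * ENNReal.ofReal (m / 2 * t ^ (m - 2))
      = ∫⁻ t in Set.Ioc 0 s, ENNReal.ofReal ((2 * (M - M * t / s)) * (m / 2 * t ^ (m - 2))) := by
        rw [← Measure.restrict_congr_set Ioc_ae_eq_Icc]
        refine setLIntegral_congr_fun measurableSet_Ioc ?_
        intro t ht
        have h1 : t / s ≤ 1 := (div_le_one hs).2 ht.2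
        have h2 : 0 ≤ M - M * t / s := by
          have h3 := mul_le_mul_of_nonneg_left h1 hM
          rw [mul_one] at h3
          rw [mul_div_assoc]
          linarith
        exact (ENNReal.ofReal_mul (by linarith : (0:ℝ) ≤ 2 * (M - M * t / s))).symm
    _ = ENNReal.ofReal (∫ t in Set.Ioc 0 s, f1 t) := by
        rw [← ofReal_integral_eq_lintegral_ofReal]
        · congr 1
          refine setIntegral_congr_fun measurableSet_Ioc ?_
          intro t ht
          exact heq t ht
        · exact hint.congr_fun (fun t ht => (heq t ht).symm) measurableSet_Ioc
        · filter_upwards [ae_restrict_mem measurableSet_Ioc] with t ht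
          rw [heq t ht] at *
          exact hpos t ht
    _ = ENNReal.ofReal (M * s ^ (m - 1) * (1 / (m - 1))) := by
        congr 1
        rw [← intervalIntegral.integral_of_le hs.le]
        have e1 : ∫ t in (0:ℝ)..s, f1 t
            = M * m * ((s ^ (m - 1) - 0 ^ (m - 1)) / (m - 1))
              - M * m / s * ((s ^ m - 0 ^ m) / m) := by
          rw [hf1]
          rw [intervalIntegral.integral_sub, intervalIntegral.integral_const_mul,
            intervalIntegral.integral_const_mul,
            integral_rpow (Or.inl (by linarith : (-1:ℝ) < m - 2)),
            integral_rpow (Or.inl (by linarith : (-1:ℝ) < m - 1))]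
          · rw [show m - 2 + 1 = m - 1 by ring, show m - 1 + 1 = m by ring]
          · exact (intervalIntegral.intervalIntegrable_rpow' (by linarith)).const_mul _
          · exact (intervalIntegral.intervalIntegrable_rpow' (by linarith)).const_mul _
        rw [e1, Real.zero_rpow (ne_of_gt hm1),
          Real.zero_rpow (ne_of_gt (by linarith : (0:ℝ) < m))]
        have h2 : s ^ m = s ^ (m - 1) * s := by
          have := Real.rpow_add_one (ne_of_gt hs) (m - 1)
          rw [show m - 1 + 1 = m by ring] at this
          exact this
        rw [h2]
        field_simp
        ring

lemma lint_abs_rpow (m b : ℝ) (hm : 1 < m) (hb : 0 ≤ b) :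
    ∫⁻ t in Set.Icc (-b) b, ENNReal.ofReal (m / 2 * |t| ^ (m - 2))
      = 2 * ENNReal.ofReal (m / 2 * b ^ (m - 1) / (m - 1)) := by
  have h := lint_abs_even hb (fun y => ENNReal.ofReal (m / 2 * y ^ (m - 2)))
  rw [h, lint_Icc_rpow m b hm hb]

lemma lint_abs_cone (m s M : ℝ) (hm : 1 < m) (hs : 0 < s) (hM : 0 ≤ M) :
    ∫⁻ t in Set.Icc (-s) s, ENNReal.ofReal (2 * (M - M * |t| / s))
        * ENNReal.ofReal (m / 2 * |t| ^ (m - 2))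
      = 2 * ENNReal.ofReal (M * s ^ (m - 1) * (1 / (m - 1))) := by
  have h := lint_abs_even hs.le (fun y => ENNReal.ofReal (2 * (M - M * y / s))
    * ENNReal.ofReal (m / 2 * y ^ (m - 2)))
  rw [h, lint_Icc_cone m s M hm hs hM]

lemma muM_rect (m a b : ℝ) (hm : 1 < m) (ha : 0 ≤ a) (hb : 0 ≤ b) :
    muM m (Set.Icc (-a) a ×ˢ Set.Icc (-b) b)
      = ENNReal.ofReal (2 * a) * (2 * ENNReal.ofReal (m / 2 * b ^ (m - 1) / (m - 1))) := by
  have hd : Measurable fun t : ℝ => ENNReal.ofReal (m / 2 * |t| ^ (m - 2)) := by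
    apply Measurable.ennreal_ofReal
    exact (measurable_const.mul ((measurable_abs).pow_const _))
  rw [muM_slice m ((measurableSet_Icc).prod measurableSet_Icc)]
  have key : ∀ t : ℝ, volume {x | (x, t) ∈ Set.Icc (-a) a ×ˢ Set.Icc (-b) b}
        * ENNReal.ofReal (m / 2 * |t| ^ (m - 2))
      = (Set.Icc (-b) b).indicator
          (fun t => ENNReal.ofReal (2 * a) * ENNReal.ofReal (m / 2 * |t| ^ (m - 2))) t := by
    intro t
    by_cases ht : t ∈ Set.Icc (-b) b
    · rw [Set.indicator_of_mem ht]
      congr 1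
      have : {x | (x, t) ∈ Set.Icc (-a) a ×ˢ Set.Icc (-b) b} = Set.Icc (-a) a :=
        Set.ext fun x => ⟨fun h => h.1, fun h => ⟨h, ht⟩⟩
      rw [this, Real.volume_Icc]
      congr 1
      ring
    · rw [Set.indicator_of_notMem ht]
      have : {x | (x, t) ∈ Set.Icc (-a) a ×ˢ Set.Icc (-b) b} = (∅ : Set ℝ) :=
        Set.eq_empty_iff_forall_notMem.2 fun x hx => ht hx.2
      rw [this]
      simp
  simp_rw [key]
  rw [lintegral_indicator measurableSet_Icc, lintegral_const_mul _ hd,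
    lint_abs_rpow m b hm hb]

theorem muM_union_ge_convexHull
    (m : ℝ) (hm : 1 < m)
    (K : Set (ℝ × ℝ))
    (hKsub : K ⊆ {p : ℝ × ℝ | 0 ≤ p.2})
    (hKconv : Convex ℝ K) (hKcomp : IsCompact K)
    (hKint : (interior K).Nonempty)
    (hK0 : (0, 0) ∈ frontier K)
    (hKsymm : ∀ p ∈ K, (-p.1, p.2) ∈ K) :
    muM m (K ∪ (fun p : ℝ × ℝ => (p.1, -p.2)) '' K)
      ≥ ENNReal.ofReal ((m - 1) / m) *
          muM m (convexHull ℝ (K ∪ (fun p : ℝ × ℝ => (p.1, -p.2)) '' K)) := by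
  have hm0 : (0:ℝ) < m := by linarith
  have hm1 : (0:ℝ) < m - 1 := by linarith
  set σ : ℝ × ℝ → ℝ × ℝ := fun p => (p.1, -p.2) with hσ
  set C : Set (ℝ × ℝ) := K ∪ σ '' K with hC
  have hKcl : IsClosed K := hKcomp.isClosed
  have h00 : ((0:ℝ), (0:ℝ)) ∈ K := by
    have := frontier_subset_closure (s := K) hK0
    rwa [hKcl.closure_eq] at this
  -- the widest point of K
  obtain ⟨⟨M, s0⟩, hvK, hvmax⟩ :=
    hKcomp.exists_isMaxOn ⟨(0,0), h00⟩ continuous_fst.continuousOn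
  have hub : ∀ q ∈ K, q.1 ≤ M := fun q hq => hvmax hq
  have hs0 : 0 ≤ s0 := hKsub hvK
  have hMnn : 0 ≤ M := hub _ h00
  have habs : ∀ q ∈ K, |q.1| ≤ M := by
    intro q hq
    rw [abs_le]
    refine ⟨?_, hub _ hq⟩
    have hneg : -q.1 ≤ M := hub _ (hKsymm q hq)
    linarith
  have hMpos : 0 < M := by
    rcases hKint with ⟨p, hp⟩
    rcases Metric.isOpen_iff.1 isOpen_interior p hp with ⟨ε, hε, hball⟩
    have h1 : (p.1 + ε/2, p.2) ∈ K := by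
      apply interior_subset (hball ?_)
      rw [Metric.mem_ball, Prod.dist_eq, Real.dist_eq, Real.dist_eq]
      simp only [add_sub_cancel_left, sub_self, abs_zero]
      rw [abs_of_pos (by linarith : (0:ℝ) < ε/2)]
      exact max_lt (by linarith) hε
    by_contra h
    push_neg at h
    have ha : p.1 + ε/2 ≤ M := hub _ h1
    have hb : -p.1 ≤ M := hub _ (hKsymm _ (interior_subset hp))
    linarith
  -- the slice at height s0 contains [-M, M]
  have hsliceS : ∀ x : ℝ, |x| ≤ M → (x, s0) ∈ K := by
    intro x hx
    rcases abs_le.1 hx with ⟨h1x, h2x⟩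
    have hnegv : ((-M : ℝ), s0) ∈ K := by
      have := hKsymm _ hvK
      simpa using this
    have ha : (0:ℝ) ≤ (M - x)/(2*M) := div_nonneg (by linarith) (by linarith)
    have hb : (0:ℝ) ≤ (x + M)/(2*M) := div_nonneg (by linarith) (by linarith)
    have hab : (M - x)/(2*M) + (x + M)/(2*M) = 1 := by
      field_simp
      ring
    have hmem := hKconv hnegv hvK ha hb hab
    have hpt : ((M - x)/(2*M)) • ((-M : ℝ), s0) + ((x + M)/(2*M)) • ((M : ℝ), s0)
        = ((x : ℝ), s0) := by
      rw [Prod.smul_mk, Prod.smul_mk, Prod.mk_add_mk, Prod.mk.injEq]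
      constructor
      · field_simp
        ring_nf
        rw [mul_comm M x, mul_assoc, mul_inv_cancel₀ hMpos.ne', mul_one]
      · rw [smul_eq_mul, smul_eq_mul, ← add_mul, hab, one_mul]
    rwa [hpt] at hmem
  -- points in the cone below (±M, s0) are in K
  have hconeK : ∀ x t : ℝ, 0 ≤ t → t ≤ s0 → |x| ≤ M * t / s0 → (x, t) ∈ K := by
    intro x t ht0 hts hxle
    rcases eq_or_lt_of_le ht0 with h0 | h0
    · have ht : t = 0 := h0.symm
      subst ht
      have : |x| ≤ 0 := by
        rw [mul_zero, zero_div] at hxle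
        exact hxle
      have hx0 : x = 0 := abs_nonpos_iff.1 this
      rw [hx0]
      exact h00
    · have hs0pos : 0 < s0 := lt_of_lt_of_le h0 hts
      have hmem : (x * s0 / t, s0) ∈ K := by
        apply hsliceS
        rw [abs_div, abs_mul, abs_of_pos hs0pos, abs_of_pos h0, div_le_iff₀ h0]
        have h1 : |x| * s0 ≤ (M * t / s0) * s0 :=
          mul_le_mul_of_nonneg_right hxle hs0pos.le
        rw [div_mul_cancel₀ _ (ne_of_gt hs0pos)] at h1
        linarith
      have hθa : (0:ℝ) ≤ t / s0 := le_of_lt (div_pos h0 hs0pos)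
      have hθb : (0:ℝ) ≤ 1 - t / s0 := by
        rw [sub_nonneg]
        exact (div_le_one hs0pos).2 hts
      have hmem2 := hKconv hmem h00 hθa hθb (by ring)
      have hpt : (t / s0) • ((x * s0 / t : ℝ), s0) + (1 - t / s0) • ((0:ℝ), (0:ℝ))
          = ((x : ℝ), t) := by
        rw [Prod.smul_mk, Prod.smul_mk, Prod.mk_add_mk, Prod.mk.injEq]
        constructor
        · field_simp
          ring_nf
          rw [mul_assoc (s0 * x) t, mul_inv_cancel₀ h0.ne', mul_one, mul_comm s0 x, mul_assoc,
            mul_inv_cancel₀ hs0pos.ne', mul_one]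
        · simp [smul_eq_mul]
          field_simp
      rwa [hpt] at hmem2
  -- membership in C
  have hσK : ∀ p : ℝ × ℝ, p ∈ σ '' K ↔ (p.1, -p.2) ∈ K := by
    intro p
    constructor
    · rintro ⟨q, hq, rfl⟩
      simpa [hσ] using hq
    · intro h
      exact ⟨(p.1, -p.2), h, by simp [hσ]⟩
  have hCmem : ∀ p : ℝ × ℝ, p ∈ C ↔ (p.1, |p.2|) ∈ K := by
    intro p
    constructor
    · intro hp
      rcases hp with hp | hp
      · rw [abs_of_nonneg (hKsub hp)]
        exact hp
      · rw [hσK] at hp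
        have hneg : 0 ≤ -p.2 := hKsub hp
        rw [abs_of_nonpos (by linarith)]
        exact hp
    · intro hp
      rcases le_or_gt 0 p.2 with h | h
      · left
        rwa [abs_of_nonneg h] at hp
      · right
        rw [hσK]
        rwa [abs_of_neg h] at hp
  -- the enveloping convex set R'
  set R : Set (ℝ × ℝ) := {p | (p.1, max |p.2| s0) ∈ K} with hR
  have hCR : C ⊆ R := by
    intro p hp
    rw [hCmem] at hp
    rcases le_or_gt s0 |p.2| with h | h
    · show (p.1, max |p.2| s0) ∈ K
      rw [max_eq_left h]
      exact hp
    · show (p.1, max |p.2| s0) ∈ K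
      rw [max_eq_right h.le]
      exact hsliceS _ (habs (p.1, |p.2|) hp)
  have hRconv : Convex ℝ R := by
    intro p hp q hq a b ha hb hab
    have hpK : (p.1, max |p.2| s0) ∈ K := hp
    have hqK : (q.1, max |q.2| s0) ∈ K := hq
    set z : ℝ × ℝ := a • p + b • q with hz
    have hzfst : z.1 = a * p.1 + b * q.1 := by
      rw [hz]; simp [Prod.fst_add, smul_eq_mul]
    have hzsnd : z.2 = a * p.2 + b * q.2 := by
      rw [hz]; simp [Prod.snd_add, smul_eq_mul]
    set A := max |p.2| s0 with hA
    set B := max |q.2| s0 with hB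
    set T := a * A + b * B with hT
    have hTK : (z.1, T) ∈ K := by
      have hmem := hKconv hpK hqK ha hb hab
      have hpt : a • ((p.1 : ℝ), A) + b • ((q.1 : ℝ), B) = ((z.1 : ℝ), T) := by
        rw [Prod.smul_mk, Prod.smul_mk, Prod.mk_add_mk, Prod.mk.injEq]
        constructor
        · rw [smul_eq_mul, smul_eq_mul, hzfst]
        · rw [smul_eq_mul, smul_eq_mul, hT]
      rwa [hpt] at hmem
    have hz1 : |z.1| ≤ M := by
      have h1 : |p.1| ≤ M := habs (p.1, A) hpK
      have h2 : |q.1| ≤ M := habs (q.1, B) hqK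
      rw [hzfst]
      calc |a * p.1 + b * q.1| ≤ |a * p.1| + |b * q.1| := abs_add_le _ _
        _ = a * |p.1| + b * |q.1| := by
            rw [abs_mul, abs_mul, abs_of_nonneg ha, abs_of_nonneg hb]
        _ ≤ a * M + b * M := by
            have := mul_le_mul_of_nonneg_left h1 ha
            have := mul_le_mul_of_nonneg_left h2 hb
            linarith
        _ = M := by rw [← add_mul, hab, one_mul]
    have hzsK : (z.1, s0) ∈ K := hsliceS _ hz1
    set T0 := max |z.2| s0 with hT0
    have hs0T0 : s0 ≤ T0 := le_max_right _ _
    have hT0T : T0 ≤ T := by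
      apply max_le
      · rw [hzsnd]
        have h1 : |p.2| ≤ A := le_max_left _ _
        have h2 : |q.2| ≤ B := le_max_left _ _
        calc |a * p.2 + b * q.2| ≤ |a * p.2| + |b * q.2| := abs_add_le _ _
          _ = a * |p.2| + b * |q.2| := by
              rw [abs_mul, abs_mul, abs_of_nonneg ha, abs_of_nonneg hb]
          _ ≤ a * A + b * B := by
              have := mul_le_mul_of_nonneg_left h1 ha
              have := mul_le_mul_of_nonneg_left h2 hb
              linarith
      · have h1 : s0 ≤ A := le_max_right _ _
        have h2 : s0 ≤ B := le_max_right _ _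
        calc s0 = a * s0 + b * s0 := by rw [← add_mul, hab, one_mul]
          _ ≤ a * A + b * B := by
            have := mul_le_mul_of_nonneg_left h1 ha
            have := mul_le_mul_of_nonneg_left h2 hb
            linarith
    show (z.1, T0) ∈ K
    rcases eq_or_lt_of_le (le_trans hs0T0 hT0T) with hTs | hTs
    · have h4 : T ≤ s0 := le_of_eq hTs.symm
      have h5 : T0 = s0 := le_antisymm (le_trans hT0T h4) hs0T0
      rw [h5]
      exact hzsK
    · have hne : T - s0 ≠ 0 := ne_of_gt (by linarith)
      have hθ : 0 ≤ (T - T0)/(T - s0) := div_nonneg (by linarith) (by linarith)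
      have hη : 0 ≤ (T0 - s0)/(T - s0) := div_nonneg (by linarith) (by linarith)
      have hθη : (T - T0)/(T - s0) + (T0 - s0)/(T - s0) = 1 := by
        rw [← add_div, div_eq_one_iff_eq hne]
        ring
      have hmem := hKconv hzsK hTK hθ hη hθη
      have hpt : ((T - T0)/(T - s0)) • ((z.1 : ℝ), s0) + ((T0 - s0)/(T - s0)) • ((z.1 : ℝ), T)
          = ((z.1 : ℝ), T0) := by
        rw [Prod.smul_mk, Prod.smul_mk, Prod.mk_add_mk, Prod.mk.injEq]
        constructor
        · rw [smul_eq_mul, smul_eq_mul, ← add_mul, hθη, one_mul]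
        · rw [smul_eq_mul, smul_eq_mul]
          field_simp
          ring
      rwa [hpt] at hmem
  have hconvCR : convexHull ℝ C ⊆ R := convexHull_min hCR hRconv
  -- the difference set D
  set D : Set (ℝ × ℝ) := {p | |p.2| ≤ s0 ∧ M * |p.2| / s0 ≤ |p.1| ∧ |p.1| ≤ M} with hD
  have hRCD : R \ C ⊆ D := by
    rintro p ⟨hpR, hpC⟩
    have hpK : (p.1, max |p.2| s0) ∈ K := hpR
    have h2 : |p.2| ≤ s0 := by
      by_contra h
      push_neg at h
      rw [max_eq_left h.le] at hpK
      exact hpC ((hCmem p).2 hpK)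
    have h3 : |p.1| ≤ M := habs (p.1, max |p.2| s0) hpK
    refine ⟨h2, ?_, h3⟩
    by_contra h
    push_neg at h
    have : (p.1, |p.2|) ∈ K := hconeK p.1 |p.2| (abs_nonneg _) h2 h.le
    exact hpC ((hCmem p).2 this)
  have hrectR : Set.Icc (-M) M ×ˢ Set.Icc (-s0) s0 ⊆ R := by
    rintro ⟨x, t⟩ ⟨hx, ht⟩
    show (x, max |t| s0) ∈ K
    have : |t| ≤ s0 := abs_le.2 ⟨ht.1, ht.2⟩
    rw [max_eq_right this]
    exact hsliceS _ (abs_le.2 ⟨hx.1, hx.2⟩)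
  -- measurability
  have hKmeas : MeasurableSet K := hKcl.measurableSet
  have hσcont : Continuous σ := continuous_fst.prodMk continuous_snd.neg
  have hCmeas : MeasurableSet C := by
    have : C = K ∪ σ ⁻¹' K := by
      ext p
      rw [hC, Set.mem_union, Set.mem_union, hσK]
      rfl
    rw [this]
    exact hKmeas.union (hσcont.measurable hKmeas)
  have hRmeas : MeasurableSet R := by
    have hFcont : Continuous fun p : ℝ × ℝ => (p.1, max |p.2| s0) :=
      continuous_fst.prodMk ((continuous_snd.abs).max continuous_const)
    exact hFcont.measurable hKmeas
  have hDmeas : MeasurableSet D := by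
    apply MeasurableSet.inter
    · exact measurableSet_le (measurable_snd.abs) measurable_const
    apply MeasurableSet.inter
    · exact measurableSet_le ((measurable_snd.abs.const_mul M).div_const s0)
        (measurable_fst.abs)
    · exact measurableSet_le (measurable_fst.abs) measurable_const
  -- bound on muM D
  have hDbound : muM m D ≤ 2 * ENNReal.ofReal (M * s0 ^ (m - 1) * (1 / (m - 1))) := by
    rcases eq_or_lt_of_le hs0 with hs0z | hs0pos
    · -- s0 = 0
      have : muM m D = 0 := by
        have hDsub : D ⊆ {p : ℝ × ℝ | p.2 = 0} := by
          rintro p ⟨h1, _⟩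
          rw [← hs0z] at h1
          exact abs_nonpos_iff.1 h1
        have hnull : muM m {p : ℝ × ℝ | p.2 = 0} = 0 := by
          have hms : MeasurableSet {p : ℝ × ℝ | p.2 = 0} :=
            measurable_snd (measurableSet_singleton 0)
          rw [muM, withDensity_apply _ hms]
          have : volume {p : ℝ × ℝ | p.2 = 0} = 0 := by
            rw [Measure.volume_eq_prod]
            have : {p : ℝ × ℝ | p.2 = 0} = (Set.univ : Set ℝ) ×ˢ ({0} : Set ℝ) := by
              ext ⟨x, t⟩; simp [eq_comm]
            rw [this, Measure.prod_prod]
            simp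
          rw [setLIntegral_measure_zero _ _ this]
        exact le_antisymm (le_trans (measure_mono hDsub) (le_of_eq hnull)) zero_le
      rw [this]
      exact zero_le
    · -- 0 < s0
      rw [muM_slice m hDmeas]
      have hbound : ∀ t : ℝ, volume {x | (x, t) ∈ D} * ENNReal.ofReal (m / 2 * |t| ^ (m - 2))
          ≤ (Set.Icc (-s0) s0).indicator
              (fun t => ENNReal.ofReal (2 * (M - M * |t| / s0))
                * ENNReal.ofReal (m / 2 * |t| ^ (m - 2))) t := by
        intro t
        by_cases ht : t ∈ Set.Icc (-s0) s0
        · rw [Set.indicator_of_mem ht]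
          apply mul_le_mul_left
          have hsub : {x | (x, t) ∈ D} ⊆
              Set.Icc (-M) (-(M * |t| / s0)) ∪ Set.Icc (M * |t| / s0) M := by
            rintro x ⟨_, h2, h3⟩
            rcases le_or_gt 0 x with h | h
            · right
              rw [abs_of_nonneg h] at h2 h3
              exact ⟨h2, h3⟩
            · left
              rw [abs_of_neg h] at h2 h3
              constructor <;> linarith
          calc volume {x | (x, t) ∈ D}
              ≤ volume (Set.Icc (-M) (-(M * |t| / s0)) ∪ Set.Icc (M * |t| / s0) M) :=
                measure_mono hsub
            _ ≤ volume (Set.Icc (-M) (-(M * |t| / s0))) + volume (Set.Icc (M * |t| / s0) M) :=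
                measure_union_le _ _
            _ = ENNReal.ofReal (M - M * |t| / s0) + ENNReal.ofReal (M - M * |t| / s0) := by
                rw [Real.volume_Icc, Real.volume_Icc]
                congr 1 <;> congr 1 <;> ring
            _ ≤ ENNReal.ofReal (2 * (M - M * |t| / s0)) := by
                have habst : |t| ≤ s0 := abs_le.2 ⟨ht.1, ht.2⟩
                have hnn : 0 ≤ M - M * |t| / s0 := by
                  rw [sub_nonneg, div_le_iff₀ hs0pos]
                  nlinarith [abs_nonneg t]
                rw [show (2:ℝ) * (M - M * |t| / s0) = (M - M * |t| / s0) + (M - M * |t| / s0)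
                  by ring, ENNReal.ofReal_add hnn hnn]
        · rw [Set.indicator_of_notMem ht]
          have : {x | (x, t) ∈ D} = (∅ : Set ℝ) := by
            ext x
            simp only [Set.mem_setOf_eq, Set.mem_empty_iff_false, iff_false]
            rintro ⟨h1, _⟩
            exact ht (abs_le.1 h1 |> fun h => ⟨h.1, h.2⟩)
          rw [this]
          simp
      calc ∫⁻ t, volume {x | (x, t) ∈ D} * ENNReal.ofReal (m / 2 * |t| ^ (m - 2))
          ≤ ∫⁻ t, (Set.Icc (-s0) s0).indicator
              (fun t => ENNReal.ofReal (2 * (M - M * |t| / s0))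
                * ENNReal.ofReal (m / 2 * |t| ^ (m - 2))) t := lintegral_mono hbound
        _ = ∫⁻ t in Set.Icc (-s0) s0, ENNReal.ofReal (2 * (M - M * |t| / s0))
              * ENNReal.ofReal (m / 2 * |t| ^ (m - 2)) := by
            rw [lintegral_indicator measurableSet_Icc]
        _ = 2 * ENNReal.ofReal (M * s0 ^ (m - 1) * (1 / (m - 1))) :=
            lint_abs_cone m s0 M hm hs0pos hMnn
  -- rectangle measure
  have hrectval : muM m (Set.Icc (-M) M ×ˢ Set.Icc (-s0) s0)
      = ENNReal.ofReal (2 * M) * (2 * ENNReal.ofReal (m / 2 * s0 ^ (m - 1) / (m - 1))) :=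
    muM_rect m M s0 hm hMnn hs0
  -- finiteness of muM R
  have hRfin : muM m R ≠ ⊤ := by
    obtain ⟨w, hwK, hwmax⟩ := hKcomp.exists_isMaxOn ⟨(0,0), h00⟩ continuous_snd.continuousOn
    have hwub : ∀ q ∈ K, q.2 ≤ w.2 := fun q hq => hwmax hq
    set Y := max w.2 s0
    have hYnn : 0 ≤ Y := le_trans hs0 (le_max_right _ _)
    have hRsub : R ⊆ Set.Icc (-M) M ×ˢ Set.Icc (-Y) Y := by
      intro p hp
      have hpK : (p.1, max |p.2| s0) ∈ K := hp
      have h1 : |p.1| ≤ M := habs (p.1, max |p.2| s0) hpK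
      have h2 : max |p.2| s0 ≤ w.2 := hwub _ hpK
      have h3 : |p.2| ≤ Y := le_trans (le_trans (le_max_left _ _) h2) (le_max_left _ _)
      exact ⟨abs_le.1 h1, abs_le.1 h3⟩
    have := measure_mono (μ := muM m) hRsub
    rw [muM_rect m M Y hm hMnn hYnn] at this
    exact ne_top_of_le_ne_top (by
      apply ENNReal.mul_ne_top ENNReal.ofReal_ne_top
      exact ENNReal.mul_ne_top (by simp) ENNReal.ofReal_ne_top) this
  -- assembly
  set c : ℝ≥0∞ := ENNReal.ofReal ((m - 1) / m)
  set c' : ℝ≥0∞ := ENNReal.ofReal (1 / m)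
  set E : ℝ≥0∞ := 2 * ENNReal.ofReal (M * s0 ^ (m - 1) * (1 / (m - 1)))
  have hcc' : c + c' = 1 := by
    rw [← ENNReal.ofReal_add (by positivity) (by positivity),
      show (m - 1) / m + 1 / m = 1 by field_simp; ring]
    exact ENNReal.ofReal_one
  have hEc' : E ≤ c' * muM m R := by
    have h1 : c' * muM m (Set.Icc (-M) M ×ˢ Set.Icc (-s0) s0) = E := by
      rw [hrectval]
      rw [show ENNReal.ofReal (1/m) * (ENNReal.ofReal (2 * M)
          * (2 * ENNReal.ofReal (m / 2 * s0 ^ (m - 1) / (m - 1))))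
        = 2 * (ENNReal.ofReal (1/m) * ENNReal.ofReal (2 * M)
          * ENNReal.ofReal (m / 2 * s0 ^ (m - 1) / (m - 1))) by ring]
      rw [← ENNReal.ofReal_mul (by positivity), ← ENNReal.ofReal_mul (by positivity)]
      congr 2
      field_simp
    rw [← h1]
    exact mul_le_mul_right (measure_mono hrectR) c'
  have hRle : muM m R ≤ muM m C + E := by
    calc muM m R ≤ muM m (C ∪ (R \ C)) := by
          apply measure_mono
          intro p hp
          by_cases h : p ∈ C
          · exact Or.inl h
          · exact Or.inr ⟨hp, h⟩
      _ ≤ muM m C + muM m (R \ C) := measure_union_le _ _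
      _ ≤ muM m C + muM m D := add_le_add_right (measure_mono hRCD) _
      _ ≤ muM m C + E := add_le_add_right hDbound _
  have hkey : c * muM m R ≤ muM m C := by
    have h1 : c * muM m R + c' * muM m R ≤ muM m C + c' * muM m R := by
      rw [← add_mul, hcc', one_mul]
      exact le_trans hRle (add_le_add_right hEc' _)
    exact (ENNReal.add_le_add_iff_right
      (ENNReal.mul_ne_top (by simp [c']) hRfin)).1 h1
  calc c * muM m (convexHull ℝ C) ≤ c * muM m R :=
        mul_le_mul_right (measure_mono hconvCR) c
    _ ≤ muM m C := hkey
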